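/- arXiv:1209.3783 — 5 statements merged into one kernel-verified Lean document; each statement's English description precedes it below -/
import Mathlib

section
/- There exist constants δ₀ ∈ (0, arsinh(1)) and c > 0 such that for every ℓ ∈ (0, 2·arsinh(1)), every holomorphic function φ on the strip {w ∈ ℂ : |Re w| < X(ℓ)} with φ(w + 2πi) = φ(w) and Fourier coefficients (b_n)_{n ∈ ℤ}, and every nonzero integer n, one has c·|b_n|²·|n|^{−1}·e^{2|n|X(ℓ)} ≤ 4∫_{{(s,θ) : X_{δ₀}(ℓ) ≤ |s| < X(ℓ), 0 ≤ θ < 2π}} |φ(s+iθ)|² ρ_ℓ(s)^{−2} ds dθ, i.e. the left-hand side is bounded by ‖Φ‖²_{L²(δ₀-thick(C(ℓ)))} for Φ = φ dw². -/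
open Real MeasureTheory Set
open scoped ENNReal NNReal

/-- Half-length of the hyperbolic collar around a geodesic of length `ℓ`. -/
noncomputable def collarX (ℓ : ℝ) : ℝ :=
  (2 * π / ℓ) * (π / 2 - Real.arctan (Real.sinh (ℓ / 2)))

/-- Conformal factor of the collar metric. -/
noncomputable def collarRho (ℓ s : ℝ) : ℝ :=
  ℓ / (2 * π * Real.cos (ℓ * s / (2 * π)))

/-- Half-length of the `δ`-thin part of the collar. -/
noncomputable def collarXdelta (δ ℓ : ℝ) : ℝ :=
  if Real.sinh (ℓ / 2) ≤ Real.sinh δ then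
    (2 * π / ℓ) * (π / 2 - Real.arcsin (Real.sinh (ℓ / 2) / Real.sinh δ))
  else 0

/-!
On each circle `Re w = s` the Fourier coefficient is an average over `θ`, so by Cauchy–Schwarz
`2π |b_n|² e^{2ns} ≤ ∫₀^{2π} |φ(s+iθ)|² dθ`. Integrate this over an interval of length
`1/(4|n|)` at distance at most `1/(2|n|)` from the end of the collar where `ns > 0`: there
`e^{2ns} ≥ e^{2|n|X(ℓ) - 1}`, the interval lies in the `δ₀`-thick part for `δ₀ = arsinh (1/2)`
(the thin part stops at least `1` before the end of the collar), and `ρ_ℓ ≤ 1`. Since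
`2π/e ≥ 1`, this gives the bound with `c = 1`.
-/

theorem sq_lintegral_le_measure_univ_mul_lintegral_sq {α : Type*} [MeasurableSpace α]
    {μ : Measure α} {f : α → ℝ≥0∞} (hf : AEMeasurable f μ) :
    (∫⁻ a, f a ∂μ) ^ 2 ≤ μ univ * ∫⁻ a, f a ^ 2 ∂μ := by
  have h := ENNReal.lintegral_mul_norm_pow_le (hf.pow_const 2) aemeasurable_const
    (p := 1 / 2) (q := 1 / 2) (by norm_num) (by norm_num) (by norm_num) (g := fun _ => 1)
  simp only [ENNReal.one_rpow, mul_one, lintegral_const, one_mul] at h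
  have hsq : ∀ x : ℝ≥0∞, (x ^ 2) ^ (1 / 2 : ℝ) = x := fun x => by
    rw [← ENNReal.rpow_natCast, ← ENNReal.rpow_mul]; norm_num
  simp only [hsq] at h
  calc (∫⁻ a, f a ∂μ) ^ 2
      ≤ ((∫⁻ a, f a ^ 2 ∂μ) ^ (1 / 2 : ℝ) * μ univ ^ (1 / 2 : ℝ)) ^ 2 := by gcongr
    _ = μ univ * ∫⁻ a, f a ^ 2 ∂μ := by
      rw [mul_pow, ← ENNReal.rpow_natCast, ← ENNReal.rpow_natCast, ← ENNReal.rpow_mul,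
        ← ENNReal.rpow_mul]
      norm_num [mul_comm]

theorem enorm_intervalIntegral_sq_le {E : Type*} [NormedAddCommGroup E] [NormedSpace ℝ E]
    {g : ℝ → E} {T : ℝ} (hT : 0 ≤ T) (hg : AEStronglyMeasurable g (volume.restrict (Ico 0 T))) :
    ‖∫ θ in (0 : ℝ)..T, g θ‖ₑ ^ 2 ≤ ENNReal.ofReal T * ∫⁻ θ in Ico 0 T, ‖g θ‖ₑ ^ 2 := by
  have hIco : volume.restrict (Ico 0 T) = volume.restrict (Ioc 0 T) :=
    Measure.restrict_congr_set Ico_ae_eq_Ioc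
  calc ‖∫ θ in (0 : ℝ)..T, g θ‖ₑ ^ 2 ≤ (∫⁻ θ in Ico 0 T, ‖g θ‖ₑ) ^ 2 := by
        rw [intervalIntegral.integral_of_le hT, hIco]
        gcongr
        exact enorm_integral_le_lintegral_enorm _
    _ ≤ _ := by
        simpa [Real.volume_Ico] using
          sq_lintegral_le_measure_univ_mul_lintegral_sq hg.enorm

theorem mul_measure_le_setLIntegral_prod {α β : Type*} [MeasurableSpace α] [MeasurableSpace β]
    {μ : Measure α} {ν : Measure β} [SFinite μ] [SFinite ν] {s : Set α} {t : Set β}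
    (hs : MeasurableSet s) {f : α × β → ℝ≥0∞} (hf : AEMeasurable f ((μ.prod ν).restrict (s ×ˢ t))) {c : ℝ≥0∞}
    (hc : ∀ x ∈ s, c ≤ ∫⁻ y in t, f (x, y) ∂ν) :
    c * μ s ≤ ∫⁻ z in s ×ˢ t, f z ∂μ.prod ν := by
  rw [setLIntegral_prod f hf, ← setLIntegral_const]
  exact setLIntegral_mono' hs hc

noncomputable def collarCoeff (φ : ℂ → ℂ) (n : ℤ) (s : ℝ) : ℂ :=
  (((2 * π : ℝ) : ℂ))⁻¹ * ∫ θ in (0:ℝ)..(2 * π),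
    φ ((s : ℂ) + (θ : ℂ) * Complex.I) * Complex.exp (-(n : ℂ) * ((s : ℂ) + (θ : ℂ) * Complex.I))

theorem collarCoeff_eq (φ : ℂ → ℂ) (n : ℤ) (s : ℝ) :
    collarCoeff φ n s = (((2 * π : ℝ) : ℂ))⁻¹ * Real.exp (-n * s) * ∫ θ in (0:ℝ)..(2 * π),
      φ ((s : ℂ) + (θ : ℂ) * Complex.I) * Complex.exp (((-n * θ : ℝ) : ℂ) * Complex.I) := by
  rw [collarCoeff, mul_assoc]
  congr 1
  rw [← intervalIntegral.integral_const_mul]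
  apply intervalIntegral.integral_congr
  intro θ _
  beta_reduce
  rw [mul_left_comm, Complex.ofReal_exp, ← Complex.exp_add]
  push_cast
  ring_nf

theorem ofReal_two_pi_mul_norm_collarCoeff_sq_le {φ : ℂ → ℂ} {s : ℝ}
    (hφ : Continuous fun θ : ℝ => φ ((s : ℂ) + (θ : ℂ) * Complex.I)) (n : ℤ) :
    ENNReal.ofReal (2 * π * ‖collarCoeff φ n s‖ ^ 2 * exp (2 * n * s)) ≤
      ∫⁻ θ in Ico 0 (2 * π), ‖φ ((s : ℂ) + (θ : ℂ) * Complex.I)‖ₑ ^ 2 := by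
  set g : ℝ → ℂ := fun θ => φ ((s : ℂ) + (θ : ℂ) * Complex.I) *
    Complex.exp (((-n * θ : ℝ) : ℂ) * Complex.I)
  have hg : Continuous g := hφ.mul (by fun_prop)
  have hnorm :
      ‖∫ θ in (0:ℝ)..(2 * π), g θ‖ = 2 * π * ‖collarCoeff φ n s‖ * exp (n * s) := by
    rw [collarCoeff_eq, norm_mul, norm_mul, norm_inv, Complex.norm_real, Complex.norm_real,
      Real.norm_of_nonneg (by positivity), Real.norm_of_nonneg (by positivity)]
    generalize ‖∫ θ in (0:ℝ)..(2 * π), g θ‖ = A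
    rw [neg_mul, exp_neg]
    field_simp
  have hg_enorm : ∀ θ : ℝ, ‖g θ‖ₑ = ‖φ ((s : ℂ) + (θ : ℂ) * Complex.I)‖ₑ := fun θ => by
    simp only [g, enorm_mul, Complex.enorm_exp_ofReal_mul_I, mul_one]
  have hCS := enorm_intervalIntegral_sq_le (by positivity) hg.aestronglyMeasurable (T := 2 * π)
  rw [← ofReal_norm, hnorm, ← ENNReal.ofReal_pow (by positivity)] at hCS
  simp only [hg_enorm] at hCS
  refine (ENNReal.mul_le_mul_iff_right (a := ENNReal.ofReal (2 * π)) (by simp [pi_pos])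
    ENNReal.ofReal_ne_top).mp ?_
  refine le_of_eq_of_le ?_ hCS
  rw [← ENNReal.ofReal_mul (by positivity)]
  congr 1
  rw [show 2 * (n : ℝ) * s = n * s + n * s by ring, exp_add]
  ring

theorem sinh_half_lt_one {ℓ : ℝ} (hℓ : ℓ < 2 * arsinh 1) : sinh (ℓ / 2) < 1 := by
  rw [← sinh_arsinh 1, sinh_lt_sinh]
  linarith

theorem mul_collarX_div {ℓ : ℝ} (hℓ : ℓ ≠ 0) :
    ℓ * collarX ℓ / (2 * π) = π / 2 - arctan (sinh (ℓ / 2)) := by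
  rw [collarX]
  field_simp

theorem one_lt_collarX {ℓ : ℝ} (hℓ : 0 < ℓ) (hℓ2 : ℓ < 2 * arsinh 1) : 1 < collarX ℓ := by
  have harctan : arctan (sinh (ℓ / 2)) < π / 4 := by
    rw [← arctan_one]
    exact arctan_strictMono (sinh_half_lt_one hℓ2)
  have hℓ2' : ℓ < 2 := by linarith [self_le_sinh_iff.mpr (half_pos hℓ).le, sinh_half_lt_one hℓ2]
  have hX := mul_collarX_div hℓ.ne'
  rw [div_eq_iff (by positivity)] at hX
  nlinarith [hℓ2', pi_gt_three]

theorem collarXdelta_nonneg {δ ℓ : ℝ} (hℓ : 0 < ℓ) : 0 ≤ collarXdelta δ ℓ := by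
  rw [collarXdelta]
  split_ifs
  · have := arcsin_le_pi_div_two (sinh (ℓ / 2) / sinh δ)
    have : 0 < 2 * π / ℓ := by positivity
    nlinarith
  · rfl

theorem collarXdelta_add_one_le {ℓ : ℝ} (hℓ : 0 < ℓ) (hℓ2 : ℓ < 2 * arsinh 1) :
    collarXdelta (arsinh 2⁻¹) ℓ + 1 ≤ collarX ℓ := by
  rw [collarXdelta, sinh_arsinh]
  split_ifs with h
  · set u := sinh (ℓ / 2)
    have hu : 0 < u := sinh_pos_iff.mpr (by positivity)
    have harcsin : 2 * u ≤ arcsin (u / 2⁻¹) := by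
      rw [div_inv_eq_mul, mul_comm u]
      have h2u : 2 * u ≤ 1 := by linarith
      calc 2 * u = sin (arcsin (2 * u)) := (sin_arcsin (by linarith) h2u).symm
        _ ≤ arcsin (2 * u) := sin_le (arcsin_nonneg.mpr (by linarith))
    have harctan : arctan u ≤ u := by
      have := arctan_nonneg.mpr hu.le
      simpa [tan_arctan] using le_tan this (arctan_lt_pi_div_two u)
    have hsplit : 2 * π / ℓ * (π / 2 - arcsin (u / 2⁻¹)) =
        collarX ℓ - 2 * π / ℓ * (arcsin (u / 2⁻¹) - arctan u) := by
      rw [collarX]; ring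
    have hgap : 1 ≤ 2 * π / ℓ * (arcsin (u / 2⁻¹) - arctan u) :=
      calc 1 ≤ 2 * π / ℓ * (ℓ / 2) := by field_simp; linarith [pi_gt_three]
        _ ≤ _ := by gcongr; linarith [self_le_sinh_iff.mpr (half_pos hℓ).le]
    linarith
  · linarith [one_lt_collarX hℓ hℓ2]

theorem sinh_half_div_two_le_cos {ℓ s : ℝ} (hℓ : 0 < ℓ) (hℓ2 : ℓ < 2 * arsinh 1)
    (hs : |s| < collarX ℓ) : sinh (ℓ / 2) / 2 ≤ cos (ℓ * s / (2 * π)) := by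
  set u := sinh (ℓ / 2)
  have hu : 0 < u := sinh_pos_iff.mpr (by positivity)
  have hangle : |ℓ * s / (2 * π)| ≤ π / 2 - arctan u := by
    rw [← mul_collarX_div hℓ.ne', abs_div, abs_mul, abs_of_pos hℓ, abs_of_pos two_pi_pos]
    gcongr
  have hsqrt : √(1 + u ^ 2) ≤ 2 := by
    rw [sqrt_le_left (by norm_num)]
    nlinarith [sinh_half_lt_one hℓ2]
  calc u / 2 ≤ u / √(1 + u ^ 2) := by gcongr
    _ = cos (π / 2 - arctan u) := by rw [cos_pi_div_two_sub, sin_arctan]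
    _ ≤ cos |ℓ * s / (2 * π)| :=
      cos_le_cos_of_nonneg_of_le_pi (abs_nonneg _)
        (by linarith [arctan_nonneg.mpr hu.le, pi_pos]) hangle
    _ = cos (ℓ * s / (2 * π)) := cos_abs _

theorem one_le_inv_collarRho_sq {ℓ s : ℝ} (hℓ : 0 < ℓ) (hℓ2 : ℓ < 2 * arsinh 1)
    (hs : |s| < collarX ℓ) : 1 ≤ (collarRho ℓ s ^ 2)⁻¹ := by
  have hu : ℓ / 2 ≤ sinh (ℓ / 2) := self_le_sinh_iff.mpr (half_pos hℓ).le
  have hcos := sinh_half_div_two_le_cos hℓ hℓ2 hs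
  have hcos_pos : 0 < cos (ℓ * s / (2 * π)) := by linarith
  have hρ : collarRho ℓ s ≤ 1 := by
    rw [collarRho, div_le_one (by positivity)]
    nlinarith [pi_gt_three]
  have hρ_pos : 0 < collarRho ℓ s := by rw [collarRho]; positivity
  exact one_le_inv₀ (by positivity) |>.mpr (pow_le_one₀ hρ_pos.le hρ)

theorem exists_Icc_near_edge {X X₀ t : ℝ} (hX₀ : 0 ≤ X₀) (hX : X₀ + 1 ≤ X) (ht : 1 ≤ |t|) :
    ∃ a, ∀ s ∈ Icc a (a + 1 / (4 * |t|)), X₀ ≤ |s| ∧ |s| < X ∧ 2 * |t| * X - 1 ≤ 2 * t * s := by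
  set ε := 1 / (4 * |t|)
  have hε : 0 < ε := by positivity
  have htε : 4 * |t| * ε = 1 := by simp only [ε]; field_simp
  have hε4 : ε ≤ 1 / 4 := by nlinarith
  rcases le_or_gt 0 t with h | h
  · refine ⟨X - 2 * ε, fun s ⟨hs₁, hs₂⟩ => ?_⟩
    rw [abs_of_nonneg h] at htε ⊢
    rw [abs_of_pos (by linarith)]
    refine ⟨by linarith, by linarith, by nlinarith⟩
  · refine ⟨-X + ε, fun s ⟨hs₁, hs₂⟩ => ?_⟩
    rw [abs_of_neg h] at htε ⊢
    rw [abs_of_neg (by linarith)]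
    refine ⟨by linarith, by linarith, by nlinarith⟩

theorem continuousOn_collar {ℓ : ℝ} {φ : ℂ → ℂ}
    (hφ : DifferentiableOn ℂ φ {w : ℂ | |w.re| < collarX ℓ}) :
    ContinuousOn (fun p : ℝ × ℝ => φ ((p.1 : ℂ) + (p.2 : ℂ) * Complex.I))
      {p | |p.1| < collarX ℓ} :=
  hφ.continuousOn.comp (by fun_prop) fun p hp => by simpa using hp

theorem ofReal_mul_volume_le_setLIntegral_collar {ℓ : ℝ} {φ : ℂ → ℂ}
    (hφ : DifferentiableOn ℂ φ {w : ℂ | |w.re| < collarX ℓ}) {I : Set ℝ} (hI : MeasurableSet I)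
    (hIX : ∀ s ∈ I, |s| < collarX ℓ) {n : ℤ} {b : ℂ} (hb : ∀ s ∈ I, b = collarCoeff φ n s)
    {E : ℝ} (hE : ∀ s ∈ I, E ≤ 2 * n * s) :
    ENNReal.ofReal (2 * π * ‖b‖ ^ 2 * exp E) * volume I ≤
      ∫⁻ p in I ×ˢ Ico 0 (2 * π), ‖φ ((p.1 : ℂ) + (p.2 : ℂ) * Complex.I)‖ₑ ^ 2 := by
  have hφc := (continuousOn_collar hφ).mono fun p (hp : p ∈ I ×ˢ Ico 0 (2 * π)) => hIX p.1 hp.1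
  rw [Measure.volume_eq_prod]
  refine mul_measure_le_setLIntegral_prod hI
    ((hφc.aestronglyMeasurable (hI.prod measurableSet_Ico)).enorm.pow_const 2) fun s hs => ?_
  have hslice : Continuous fun θ : ℝ => φ ((s : ℂ) + (θ : ℂ) * Complex.I) :=
    (continuousOn_collar hφ).comp_continuous (by fun_prop : Continuous fun θ : ℝ => (s, θ))
      fun _ => hIX s hs
  refine le_trans ?_ (ofReal_two_pi_mul_norm_collarCoeff_sq_le hslice n)
  rw [← hb s hs]
  gcongr
  exact hE s hs

def collarThick (δ ℓ : ℝ) : Set (ℝ × ℝ) :=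
  {p | collarXdelta δ ℓ ≤ |p.1| ∧ |p.1| < collarX ℓ ∧ p.2 ∈ Ico 0 (2 * π)}

theorem setLIntegral_prod_Ico_le_setLIntegral_collarThick {δ ℓ : ℝ} (hℓ : 0 < ℓ)
    (hℓ2 : ℓ < 2 * arsinh 1) (φ : ℂ → ℂ) {I : Set ℝ} (hI : MeasurableSet I)
    (hIthick : ∀ s ∈ I, collarXdelta δ ℓ ≤ |s| ∧ |s| < collarX ℓ) :
    ∫⁻ p in I ×ˢ Ico 0 (2 * π), ‖φ ((p.1 : ℂ) + (p.2 : ℂ) * Complex.I)‖ₑ ^ 2 ≤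
      ∫⁻ p in collarThick δ ℓ, ‖φ ((p.1 : ℂ) + (p.2 : ℂ) * Complex.I)‖ₑ ^ 2 *
        ENNReal.ofReal ((collarRho ℓ p.1 ^ 2)⁻¹) :=
  calc _ ≤ ∫⁻ p in I ×ˢ Ico 0 (2 * π), ‖φ ((p.1 : ℂ) + (p.2 : ℂ) * Complex.I)‖ₑ ^ 2 *
          ENNReal.ofReal ((collarRho ℓ p.1 ^ 2)⁻¹) :=
        setLIntegral_mono' (hI.prod measurableSet_Ico) fun p hp => le_mul_of_one_le_right' <|
          ENNReal.one_le_ofReal.mpr (one_le_inv_collarRho_sq hℓ hℓ2 (hIthick p.1 hp.1).2)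
    _ ≤ _ := lintegral_mono_set fun p hp => by
        rw [collarThick]
        exact ⟨(hIthick p.1 hp.1).1, (hIthick p.1 hp.1).2, hp.2⟩

theorem ofReal_le_four_mul_ofReal_mul_volume_Icc {B M : ℝ} (hB : 0 ≤ B) (hM : 0 < M)
    (E a : ℝ) :
    ENNReal.ofReal (B * M⁻¹ * exp E) ≤
      4 * (ENNReal.ofReal (2 * π * B * exp (E - 1)) * volume (Icc a (a + 1 / (4 * M)))) := by
  rw [Real.volume_Icc, add_sub_cancel_left, ← ENNReal.ofReal_mul (by positivity),
    ← ENNReal.ofReal_ofNat 4, ← ENNReal.ofReal_mul (by norm_num)]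
  refine ENNReal.ofReal_le_ofReal ?_
  have hrhs :
      4 * (2 * π * B * exp (E - 1) * (1 / (4 * M))) = 2 * π / exp 1 * (B * M⁻¹ * exp E) := by
    rw [exp_sub]; field_simp
  have he : exp 1 ≤ 2 * π := by linarith [exp_one_lt_d9, pi_gt_three]
  rw [hrhs]
  exact le_mul_of_one_le_left (by positivity) ((one_le_div (exp_pos 1)).mpr he)

/-- For a holomorphic quadratic differential `Φ = φ dw²` on the collar `C(ℓ)` with Fourier
coefficients `b n`, one has `c |b_n|² |n|⁻¹ e^{2|n| X(ℓ)} ≤ ‖Φ‖²_{L²(δ₀-thick(C(ℓ)))}`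
for every nonzero `n`, uniformly in `ℓ`. -/
theorem fourier_coefficient_bound :
    ∃ δ₀ c : ℝ, 0 < δ₀ ∧ δ₀ < Real.arsinh 1 ∧ 0 < c ∧
      ∀ ℓ : ℝ, 0 < ℓ → ℓ < 2 * Real.arsinh 1 →
      ∀ φ : ℂ → ℂ, ∀ b : ℤ → ℂ,
        DifferentiableOn ℂ φ {w : ℂ | |w.re| < collarX ℓ} →
        (∀ w : ℂ, φ (w + 2 * (π : ℂ) * Complex.I) = φ w) →
        (∀ (n : ℤ) (s : ℝ), |s| < collarX ℓ →
          b n = (((2 * π : ℝ) : ℂ))⁻¹ * ∫ θ in (0:ℝ)..(2 * π),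
            φ ((s : ℂ) + (θ : ℂ) * Complex.I) *
              Complex.exp (-(n : ℂ) * ((s : ℂ) + (θ : ℂ) * Complex.I))) →
        ∀ n : ℤ, n ≠ 0 →
          ENNReal.ofReal (c * ‖b n‖ ^ 2 * |(n : ℝ)|⁻¹ * Real.exp (2 * |(n : ℝ)| * collarX ℓ)) ≤
            (4 : ℝ≥0∞) * ∫⁻ p in {p : ℝ × ℝ | collarXdelta δ₀ ℓ ≤ |p.1| ∧
                  |p.1| < collarX ℓ ∧ p.2 ∈ Set.Ico (0:ℝ) (2 * π)},
                (‖φ ((p.1 : ℂ) + (p.2 : ℂ) * Complex.I)‖₊ : ℝ≥0∞) ^ 2 *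
                  ENNReal.ofReal (((collarRho ℓ p.1) ^ 2)⁻¹) := by
  refine ⟨arsinh 2⁻¹, 1, arsinh_pos_iff.mpr (by norm_num), arsinh_lt_arsinh.mpr (by norm_num),
    one_pos, fun ℓ hℓ hℓ2 φ b hφ _ hb n hn => ?_⟩
  have hn : 1 ≤ |(n : ℝ)| := by rw [← Int.cast_abs]; exact_mod_cast Int.one_le_abs hn
  obtain ⟨a, ha⟩ :=
    exists_Icc_near_edge (collarXdelta_nonneg hℓ) (collarXdelta_add_one_le hℓ hℓ2) hn
  set I := Icc a (a + 1 / (4 * |(n : ℝ)|))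
  have hI : MeasurableSet I := measurableSet_Icc
  rw [one_mul]
  calc _ ≤ 4 * (ENNReal.ofReal (2 * π * ‖b n‖ ^ 2 * exp (2 * |(n : ℝ)| * collarX ℓ - 1)) *
          volume I) :=
        ofReal_le_four_mul_ofReal_mul_volume_Icc (by positivity) (by positivity) _ a
    _ ≤ 4 * ∫⁻ p in I ×ˢ Ico 0 (2 * π),
          ‖φ ((p.1 : ℂ) + (p.2 : ℂ) * Complex.I)‖ₑ ^ 2 := by
        gcongr
        exact ofReal_mul_volume_le_setLIntegral_collar hφ hI (fun s hs => (ha s hs).2.1)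
          (fun s hs => hb n s (ha s hs).2.1) fun s hs => (ha s hs).2.2
    _ ≤ _ := by
        gcongr 4 * ?_
        exact setLIntegral_prod_Ico_le_setLIntegral_collarThick hℓ hℓ2 φ hI
          fun s hs => ⟨(ha s hs).1, (ha s hs).2.1⟩
end

section
/- For every ℓ ∈ (0, 2·arsinh(1)] and every nonzero integer n, the function s ↦ e^{ns}·cos²(ℓs/(2π)) is monotone on the interval [−X(ℓ), X(ℓ)]: it is monotone increasing if n ≥ 1 and monotone decreasing if n ≤ −1. Consequently, for n ≠ 0 the function s ↦ e^{ns}·ρ_ℓ(s)^{−2} attains its supremum over any symmetric subinterval [−Y, Y] ⊆ [−X(ℓ), X(ℓ)] at an endpoint. -/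
open Real Set

/-! With `a = ℓ / (2π)`, the derivative of `e^{cs} cos²(as)` is
`e^{cs} cos(as) (c cos(as) - 2a sin(as))`, which has the sign of `c - 2a tan(as)` while
`|as| < π/2`. On the collar `a X(ℓ) = π/2 - arctan(sinh(ℓ/2))`, so
`2a tan(aX) = ℓ / (π sinh(ℓ/2)) < 2/π < 1` because `sinh x > x`; hence `|c| ≥ 1` fixes the sign
of the derivative on all of `[-X, X]`. Since `ρ_ℓ⁻²` is a constant multiple of
`cos²(ℓs/(2π))`, the endpoint statement follows from the monotonicity. -/

lemma hasDerivAt_exp_mul_mul_cos_sq (a c s : ℝ) :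
    HasDerivAt (fun s => exp (c * s) * cos (a * s) ^ 2)
      (exp (c * s) * cos (a * s) * (c * cos (a * s) - 2 * a * sin (a * s))) s := by
  have hexp := ((hasDerivAt_id' s).const_mul c).exp
  have hcos := ((hasDerivAt_id' s).const_mul a).cos.fun_pow 2
  refine (hexp.fun_mul hcos).congr_deriv ?_
  push_cast
  ring

lemma monotoneOn_exp_mul_mul_cos_sq {a c u v : ℝ} (ha : 0 ≤ a) (hu : -(π / 2) < a * u)
    (hv : a * v < π / 2) (hc : 2 * a * tan (a * v) ≤ c) :
    MonotoneOn (fun s => exp (c * s) * cos (a * s) ^ 2) (Icc u v) := by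
  refine monotoneOn_of_hasDerivWithinAt_nonneg (convex_Icc u v)
    (fun s _ => (hasDerivAt_exp_mul_mul_cos_sq a c s).continuousAt.continuousWithinAt)
    (fun s _ => (hasDerivAt_exp_mul_mul_cos_sq a c s).hasDerivWithinAt) fun s hs => ?_
  rw [interior_Icc] at hs
  have hlo : -(π / 2) < a * s := hu.trans_le (mul_le_mul_of_nonneg_left hs.1.le ha)
  have hhi : a * s ≤ a * v := mul_le_mul_of_nonneg_left hs.2.le ha
  have hcos : 0 < cos (a * s) := cos_pos_of_mem_Ioo ⟨hlo, hhi.trans_lt hv⟩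
  have htan : tan (a * s) ≤ tan (a * v) :=
    strictMonoOn_tan.monotoneOn ⟨hlo, hhi.trans_lt hv⟩ ⟨hlo.trans_le hhi, hv⟩ hhi
  have hsin : sin (a * s) = tan (a * s) * cos (a * s) := by
    rw [tan_eq_sin_div_cos, div_mul_cancel₀ _ hcos.ne']
  have hfac : 0 ≤ c * cos (a * s) - 2 * a * sin (a * s) := by
    rw [hsin]
    nlinarith [mul_le_mul_of_nonneg_left htan (by positivity : (0 : ℝ) ≤ 2 * a)]
  positivity

lemma antitoneOn_exp_mul_mul_cos_sq {a c u v : ℝ} (ha : 0 ≤ a) (hu : -(π / 2) < a * u)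
    (hv : a * v < π / 2) (hc : c ≤ 2 * a * tan (a * u)) :
    AntitoneOn (fun s => exp (c * s) * cos (a * s) ^ 2) (Icc u v) := by
  have hmono : MonotoneOn (fun s => exp (-c * s) * cos (a * s) ^ 2) (Icc (-v) (-u)) :=
    monotoneOn_exp_mul_mul_cos_sq ha (by linarith) (by linarith)
      (by rw [mul_neg, tan_neg]; linarith)
  intro x hx y hy hxy
  simpa only [mul_neg, neg_mul, neg_neg, cos_neg] using
    hmono ⟨neg_le_neg hy.2, neg_le_neg hy.1⟩ ⟨neg_le_neg hx.2, neg_le_neg hx.1⟩ (neg_le_neg hxy)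

lemma mul_collarX {ℓ : ℝ} (hℓ : ℓ ≠ 0) :
    ℓ / (2 * π) * collarX ℓ = π / 2 - arctan (sinh (ℓ / 2)) := by
  rw [collarX]
  field_simp

lemma mul_collarX_lt_pi_div_two {ℓ : ℝ} (hℓ : 0 < ℓ) : ℓ / (2 * π) * collarX ℓ < π / 2 := by
  rw [mul_collarX hℓ.ne']
  have : 0 < arctan (sinh (ℓ / 2)) := arctan_pos.mpr (sinh_pos_iff.mpr (half_pos hℓ))
  linarith

lemma two_mul_tan_mul_collarX_lt_one {ℓ : ℝ} (hℓ : 0 < ℓ) :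
    2 * (ℓ / (2 * π)) * tan (ℓ / (2 * π) * collarX ℓ) < 1 := by
  rw [mul_collarX hℓ.ne', tan_pi_div_two_sub, tan_arctan]
  have hsinh : ℓ / 2 < sinh (ℓ / 2) := self_lt_sinh_iff.mpr (half_pos hℓ)
  calc 2 * (ℓ / (2 * π)) * (sinh (ℓ / 2))⁻¹ < 2 * (ℓ / (2 * π)) * (ℓ / 2)⁻¹ := by
        gcongr
    _ = 2 / π := by field_simp
    _ < 1 := by rw [div_lt_one pi_pos]; linarith [pi_gt_three]

lemma monotoneOn_exp_mul_cos_sq_collar {ℓ c : ℝ} (hℓ : 0 < ℓ) (hc : 1 ≤ c) :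
    MonotoneOn (fun s => exp (c * s) * cos (ℓ * s / (2 * π)) ^ 2)
      (Icc (-collarX ℓ) (collarX ℓ)) := by
  simp only [mul_div_right_comm ℓ]
  have hX := mul_collarX_lt_pi_div_two hℓ
  exact monotoneOn_exp_mul_mul_cos_sq (by positivity) (by linarith) hX
    ((two_mul_tan_mul_collarX_lt_one hℓ).le.trans hc)

lemma antitoneOn_exp_mul_cos_sq_collar {ℓ c : ℝ} (hℓ : 0 < ℓ) (hc : c ≤ -1) :
    AntitoneOn (fun s => exp (c * s) * cos (ℓ * s / (2 * π)) ^ 2)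
      (Icc (-collarX ℓ) (collarX ℓ)) := by
  simp only [mul_div_right_comm ℓ]
  have hX := mul_collarX_lt_pi_div_two hℓ
  refine antitoneOn_exp_mul_mul_cos_sq (by positivity) (by linarith) hX ?_
  rw [mul_neg, tan_neg]
  linarith [two_mul_tan_mul_collarX_lt_one hℓ]

lemma inv_collarRho_sq (ℓ s : ℝ) :
    ((collarRho ℓ s) ^ 2)⁻¹ = (2 * π / ℓ) ^ 2 * cos (ℓ * s / (2 * π)) ^ 2 := by
  rw [collarRho, ← inv_pow, inv_div, div_pow, div_pow, mul_pow]
  ring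

theorem exp_cos_sq_monotone_general (ℓ : ℝ) (h1 : 0 < ℓ)
    (n : ℤ) (hn : n ≠ 0) :
    ((1 ≤ n → MonotoneOn (fun s : ℝ => Real.exp ((n : ℝ) * s) * Real.cos (ℓ * s / (2 * π)) ^ 2)
        (Set.Icc (-(collarX ℓ)) (collarX ℓ))) ∧
     (n ≤ -1 → AntitoneOn (fun s : ℝ => Real.exp ((n : ℝ) * s) * Real.cos (ℓ * s / (2 * π)) ^ 2)
        (Set.Icc (-(collarX ℓ)) (collarX ℓ)))) ∧
    ∀ Y : ℝ, 0 ≤ Y → Y ≤ collarX ℓ → ∀ s ∈ Set.Icc (-Y) Y,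
      Real.exp ((n : ℝ) * s) * ((collarRho ℓ s) ^ 2)⁻¹
        ≤ max (Real.exp ((n : ℝ) * (-Y)) * ((collarRho ℓ (-Y)) ^ 2)⁻¹)
              (Real.exp ((n : ℝ) * Y) * ((collarRho ℓ Y) ^ 2)⁻¹) := by
  have hmono (h : 1 ≤ n) := monotoneOn_exp_mul_cos_sq_collar (c := n) h1 (by exact_mod_cast h)
  have hanti (h : n ≤ -1) := antitoneOn_exp_mul_cos_sq_collar (c := n) h1 (by exact_mod_cast h)
  refine ⟨⟨hmono, hanti⟩, fun Y hY hYX s hs => ?_⟩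
  have hsub : Icc (-Y) Y ⊆ Icc (-collarX ℓ) (collarX ℓ) := Icc_subset_Icc (neg_le_neg hYX) hYX
  have hleft : -Y ∈ Icc (-Y) Y := left_mem_Icc.mpr (by linarith)
  have hright : Y ∈ Icc (-Y) Y := right_mem_Icc.mpr (by linarith)
  simp only [inv_collarRho_sq, mul_left_comm (exp _)]
  rw [← mul_max_of_nonneg _ _ (sq_nonneg _)]
  gcongr
  rcases hn.lt_or_gt with hneg | hpos
  · exact le_max_of_le_left ((hanti (by omega)).mono hsub hleft hs hs.1)
  · exact le_max_of_le_right ((hmono (by omega)).mono hsub hs hright hs.2)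

/-- For `ℓ ∈ (0, 2 arsinh 1]` and a nonzero integer `n`, the function
`s ↦ e^{ns} cos²(ℓs/(2π))` is monotone on `[-X(ℓ), X(ℓ)]` (increasing for `n ≥ 1`,
decreasing for `n ≤ -1`); consequently `s ↦ e^{ns} ρ_ℓ(s)^{-2}` attains its supremum over
any symmetric subinterval `[-Y, Y] ⊆ [-X(ℓ), X(ℓ)]` at an endpoint. -/
theorem exp_cos_sq_monotone (ℓ : ℝ) (h1 : 0 < ℓ) (h2 : ℓ ≤ 2 * Real.arsinh 1)
    (n : ℤ) (hn : n ≠ 0) :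
    ((1 ≤ n → MonotoneOn (fun s : ℝ => Real.exp ((n : ℝ) * s) * Real.cos (ℓ * s / (2 * π)) ^ 2)
        (Set.Icc (-(collarX ℓ)) (collarX ℓ))) ∧
     (n ≤ -1 → AntitoneOn (fun s : ℝ => Real.exp ((n : ℝ) * s) * Real.cos (ℓ * s / (2 * π)) ^ 2)
        (Set.Icc (-(collarX ℓ)) (collarX ℓ)))) ∧
    ∀ Y : ℝ, 0 ≤ Y → Y ≤ collarX ℓ → ∀ s ∈ Set.Icc (-Y) Y,
      Real.exp ((n : ℝ) * s) * ((collarRho ℓ s) ^ 2)⁻¹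
        ≤ max (Real.exp ((n : ℝ) * (-Y)) * ((collarRho ℓ (-Y)) ^ 2)⁻¹)
              (Real.exp ((n : ℝ) * Y) * ((collarRho ℓ Y) ^ 2)⁻¹) :=
  exp_cos_sq_monotone_general ℓ h1 n hn
end

section
/- There exists a universal constant C < ∞ such that for every 0 < δ < arsinh(1) and every 0 < ℓ ≤ 2δ one has X(ℓ) − X_δ(ℓ) ≥ π/δ − C. Consequently there exists δ₀ > 0 such that X(ℓ) − X_{δ₀}(ℓ) ≥ 1 for all 0 < ℓ ≤ 2δ₀; i.e. the δ-thin part of the collar is separated from the ends of the collar by a cylinder of definite length. -/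
open Real Set

/-!
With `s = sinh (ℓ/2)` and `t = sinh δ`, the difference `X(ℓ) - X_δ(ℓ)` equals
`(2π/ℓ) (arcsin (s/t) - arctan s)`. Since `arcsin x ≥ x` and `arctan x ≤ x`, the bracket is at
least `s (1/t - 1)`, and `s ≥ ℓ/2` turns this into `X(ℓ) - X_δ(ℓ) ≥ π (1/t - 1)`. Finally
`sinh δ (1 - δ) ≤ δ` gives `1/δ - 1/sinh δ ≤ 1`, so the bound is at least `π/δ - 2π`.
Taking `δ₀ = 1/4` yields a separation `2π ≥ 1`.
-/

namespace Real

lemma self_le_arcsin {x : ℝ} (h₀ : 0 ≤ x) (h₁ : x ≤ 1) : x ≤ arcsin x := by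
  simpa only [sin_arcsin (by linarith) h₁] using sin_le (arcsin_nonneg.2 h₀)

lemma arctan_le_self {x : ℝ} (hx : 0 ≤ x) : arctan x ≤ x := by
  simpa only [tan_arctan] using le_tan (arctan_nonneg.2 hx) (arctan_lt_pi_div_two x)

lemma sinh_mul_one_sub_le {x : ℝ} (hx : 0 ≤ x) : sinh x * (1 - x) ≤ x := by
  rcases le_total x 1 with h₁ | h₁
  · have h_exp_neg : 1 - x ≤ exp (-x) := one_sub_le_exp_neg x
    have h_exp_mul : exp x * exp (-x) = 1 := by rw [← exp_add, add_neg_cancel, exp_zero]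
    rw [sinh_eq]
    nlinarith [mul_le_mul_of_nonneg_left h_exp_neg (sub_nonneg.2 h₁), exp_pos x, exp_pos (-x),
      mul_nonneg hx (sub_nonneg.2 h₁)]
  · nlinarith [sinh_nonneg_iff.2 hx]

lemma inv_sub_inv_sinh_le_one {x : ℝ} (hx : 0 < x) : x⁻¹ - (sinh x)⁻¹ ≤ 1 := by
  have hs : 0 < sinh x := sinh_pos_iff.2 hx
  rw [inv_sub_inv hx.ne' hs.ne', div_le_one (by positivity)]
  linarith [sinh_mul_one_sub_le hx.le]

end Real

lemma collarX_sub_collarXdelta {δ ℓ : ℝ} (h : sinh (ℓ / 2) ≤ sinh δ) :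
    collarX ℓ - collarXdelta δ ℓ =
      2 * π / ℓ * (arcsin (sinh (ℓ / 2) / sinh δ) - arctan (sinh (ℓ / 2))) := by
  rw [collarX, collarXdelta, if_pos h]
  ring

lemma pi_mul_inv_sinh_sub_one_le_collarX_sub {δ ℓ : ℝ} (hδ : sinh δ ≤ 1) (hℓ : 0 < ℓ)
    (hle : ℓ ≤ 2 * δ) : π * ((sinh δ)⁻¹ - 1) ≤ collarX ℓ - collarXdelta δ ℓ := by
  set s := sinh (ℓ / 2)
  set t := sinh δ
  have hs : 0 < s := sinh_pos_iff.2 (by linarith)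
  have hst : s ≤ t := sinh_le_sinh.2 (by linarith)
  have ht : 0 < t := hs.trans_le hst
  have h_half : ℓ / 2 ≤ s := self_le_sinh_iff.2 (by linarith)
  have h_inv : 0 ≤ t⁻¹ - 1 := sub_nonneg.2 (one_le_inv₀ ht |>.2 hδ)
  have h_factor : π ≤ 2 * π / ℓ * s := by
    rw [div_mul_eq_mul_div, le_div_iff₀ hℓ]
    nlinarith [pi_pos]
  have h_bracket : s * (t⁻¹ - 1) ≤ arcsin (s / t) - arctan s := by
    have := self_le_arcsin (div_nonneg hs.le ht.le) ((div_le_one ht).2 hst)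
    have := arctan_le_self hs.le
    rw [mul_sub, mul_one, ← div_eq_mul_inv]
    linarith
  calc π * (t⁻¹ - 1) ≤ 2 * π / ℓ * s * (t⁻¹ - 1) := by gcongr
    _ = 2 * π / ℓ * (s * (t⁻¹ - 1)) := by ring
    _ ≤ 2 * π / ℓ * (arcsin (s / t) - arctan s) := by gcongr
    _ = collarX ℓ - collarXdelta δ ℓ := (collarX_sub_collarXdelta hst).symm

lemma pi_div_sub_two_pi_le_collarX_sub {δ ℓ : ℝ} (hδ : δ ≤ arsinh 1) (hℓ : 0 < ℓ)
    (hle : ℓ ≤ 2 * δ) : π / δ - 2 * π ≤ collarX ℓ - collarXdelta δ ℓ := by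
  have hδ₀ : 0 < δ := by linarith
  have h_sinh : sinh δ ≤ 1 := by simpa only [sinh_arsinh] using sinh_le_sinh.2 hδ
  have h_inv := inv_sub_inv_sinh_le_one hδ₀
  calc π / δ - 2 * π ≤ π * ((sinh δ)⁻¹ - 1) := by
        rw [div_eq_mul_inv]
        nlinarith [pi_pos]
    _ ≤ collarX ℓ - collarXdelta δ ℓ := pi_mul_inv_sinh_sub_one_le_collarX_sub h_sinh hℓ hle

lemma quarter_lt_arsinh_one : 1 / 4 < arsinh 1 := by
  rw [← arsinh_sinh (1 / 4), arsinh_lt_arsinh]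
  linarith [sinh_mul_one_sub_le (x := 1 / 4) (by norm_num)]

/-- `X(ℓ) - X_δ(ℓ) ≥ π/δ - C` for a universal constant `C`; consequently there is `δ₀ > 0`
with `X(ℓ) - X_{δ₀}(ℓ) ≥ 1` for all `0 < ℓ ≤ 2δ₀`. -/
theorem thin_part_away_from_collar_ends :
    (∃ C : ℝ, 0 < C ∧ ∀ δ ℓ : ℝ, 0 < δ → δ < Real.arsinh 1 → 0 < ℓ → ℓ ≤ 2 * δ →
        π / δ - C ≤ collarX ℓ - collarXdelta δ ℓ) ∧
    (∃ δ₀ : ℝ, 0 < δ₀ ∧ δ₀ < Real.arsinh 1 ∧ ∀ ℓ : ℝ, 0 < ℓ → ℓ ≤ 2 * δ₀ →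
        1 ≤ collarX ℓ - collarXdelta δ₀ ℓ) := by
  refine ⟨⟨2 * π, by positivity, fun δ ℓ _ hδ hℓ hle =>
    pi_div_sub_two_pi_le_collarX_sub hδ.le hℓ hle⟩,
    ⟨1 / 4, by norm_num, quarter_lt_arsinh_one, fun ℓ hℓ hle => ?_⟩⟩
  have h := pi_div_sub_two_pi_le_collarX_sub quarter_lt_arsinh_one.le hℓ hle
  linarith [pi_gt_three]
end

section
/- Let φ be a holomorphic function on the punctured unit disc {z ∈ ℂ : 0 < |z| < 1}. Then the following three statements are equivalent: (i) ∫_{0 < |z| < 1/2} |φ(z)| dA(z) < ∞, where dA is the Lebesgue area measure on ℂ; (ii) sup_{0 < |z| < 1/2} |φ(z)|·|z|²·(log|z|)² < ∞; (iii) the function z ↦ z·φ(z) extends to a holomorphic function on the unit disc {|z| < 1}, i.e. φ has at worst a simple pole at 0. -/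
/-!
If `z φ(z)` extends to a holomorphic `g` on the disc, then `|φ(z)| ≤ M / |z|` near `0`; this is
area-integrable in the plane, and `|z| log² |z|` is bounded, so (iii) gives (i) and (ii).

Conversely, (i) and (ii) both force `z² φ(z) → 0`, i.e. `z φ(z) = o(1 / z)`, and Riemann's
removable singularity theorem extends `z φ`. Under (ii) this is because `log² |z| → ∞`. Under (i)
apply the sub-mean-value inequality `π r² |φ(z)| ≤ ∫_{B(z, r)} |φ|` on the disc `B(z, |z| / 2)`,
which avoids the puncture: by absolute continuity of the integral the right-hand side tends to `0`
with the area of the disc.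
-/

open Real MeasureTheory Complex Set Filter Metric Topology
open scoped ENNReal

theorem setOf_norm_lt_and_ne_zero_mem_nhdsNE {E : Type*} [NormedAddCommGroup E] {r : ℝ}
    (hr : 0 < r) : {z : E | ‖z‖ < r ∧ z ≠ 0} ∈ 𝓝[≠] 0 :=
  mem_of_superset (inter_mem_nhdsWithin _ (ball_mem_nhds 0 hr))
    fun _ hz ↦ ⟨mem_ball_zero_iff.1 hz.2, hz.1⟩

theorem closedBall_half_norm_subset {E : Type*} [NormedAddCommGroup E] {z : E} {ε : ℝ}
    (hz : z ≠ 0) (hzε : ‖z‖ < ε / 2) : closedBall z (‖z‖ / 2) ⊆ ball 0 ε ∩ {0}ᶜ := by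
  intro w hw
  rw [mem_closedBall_iff_norm] at hw
  have hz' : 0 < ‖z‖ := norm_pos_iff.2 hz
  refine ⟨mem_ball_zero_iff.2 ?_, fun hw0 ↦ ?_⟩
  · linarith [norm_le_norm_add_norm_sub' w z]
  · rw [mem_singleton_iff.1 hw0, zero_sub, norm_neg] at hw
    linarith

theorem setLIntegral_ball_eq_setLIntegral_circleMap (G : ℂ → ℝ≥0∞) (c : ℂ) (r : ℝ) :
    ∫⁻ w in ball c r, G w =
      ∫⁻ p in Ioo 0 r ×ˢ Ioo (-π) π, ENNReal.ofReal p.1 * G (circleMap c p.1 p.2) := by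
  have hS : Ioo 0 r ×ˢ Ioo (-π) π = {p | p.1 < r} ∩ polarCoord.target := by
    ext p; simp [polarCoord_target]; tauto
  rw [← lintegral_indicator measurableSet_ball,
    ← lintegral_add_left_eq_self _ c, ← Complex.lintegral_comp_polarCoord_symm, hS,
    ← Measure.restrict_restrict (measurableSet_lt measurable_fst measurable_const),
    ← lintegral_indicator (measurableSet_lt measurable_fst measurable_const)]
  refine setLIntegral_congr_fun polarCoord.open_target.measurableSet fun p hp ↦ ?_
  have hcirc : c + Complex.polarCoord.symm p = circleMap c p.1 p.2 := by
    simp [circleMap, Complex.exp_mul_I]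
  have hmem : c + Complex.polarCoord.symm p ∈ ball c r ↔ p ∈ {q : ℝ × ℝ | q.1 < r} := by
    rw [mem_ball_iff_norm, add_sub_cancel_left, Complex.norm_polarCoord_symm, abs_of_pos hp.1]
    rfl
  by_cases hpr : p ∈ {q : ℝ × ℝ | q.1 < r}
  · rw [indicator_of_mem (hmem.2 hpr), indicator_of_mem hpr, hcirc, smul_eq_mul]
  · rw [indicator_of_notMem (mt hmem.1 hpr), indicator_of_notMem hpr, smul_zero]

section

variable {f : ℂ → ℂ}

theorem DiffContOnCl.ofReal_two_pi_mul_enorm_le_lintegral {c : ℂ} {R : ℝ}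
    (hf : DiffContOnCl ℂ f (ball c |R|)) :
    ENNReal.ofReal (2 * π) * ‖f c‖ₑ ≤ ∫⁻ θ in Ioo (-π) π, ‖f (circleMap c R θ)‖ₑ := by
  have hmean : (2 * π) • f c = ∫ θ in Ioo (-π) π, f (circleMap c R θ) := by
    rw [← hf.circleAverage, circleAverage_eq_integral_add (-π), smul_inv_smul₀ two_pi_pos.ne',
      intervalIntegral.integral_comp_add_right (fun θ ↦ f (circleMap c R θ)),
      intervalIntegral.integral_of_le (by linarith [pi_pos]), integral_Ioc_eq_integral_Ioo]
    ring_nf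
  calc ENNReal.ofReal (2 * π) * ‖f c‖ₑ = ‖(2 * π) • f c‖ₑ := by
        rw [enorm_smul, Real.enorm_eq_ofReal two_pi_pos.le]
    _ ≤ _ := hmean ▸ enorm_integral_le_lintegral_enorm _

theorem DiffContOnCl.volume_ball_mul_enorm_le_setLIntegral {c : ℂ} {r : ℝ}
    (hf : DiffContOnCl ℂ f (ball c r)) :
    volume (ball c r) * ‖f c‖ₑ ≤ ∫⁻ w in ball c r, ‖f w‖ₑ := by
  rcases le_or_gt r 0 with hr | hr
  · simp [ball_eq_empty.2 hr]
  have hS : MeasurableSet (Ioo 0 r ×ˢ Ioo (-π) π) := measurableSet_Ioo.prod measurableSet_Ioo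
  have hmaps : MapsTo (fun p : ℝ × ℝ ↦ circleMap c p.1 p.2) (Ioo 0 r ×ˢ Ioo (-π) π)
      (closure (ball c r)) := fun p hp ↦ by
    rw [closure_ball c hr.ne']
    simpa [Complex.dist_eq, circleMap_sub_center, abs_of_pos hp.1.1] using hp.1.2.le
  have hmeas : AEMeasurable (fun p : ℝ × ℝ ↦ ENNReal.ofReal p.1 * ‖f (circleMap c p.1 p.2)‖ₑ)
      ((volume.prod volume).restrict (Ioo 0 r ×ˢ Ioo (-π) π)) := by
    refine (measurable_fst.ennreal_ofReal).aemeasurable.mul ?_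
    rw [← Measure.volume_eq_prod]
    exact ((hf.continuousOn.comp (by fun_prop) hmaps).enorm).aemeasurable hS
  -- Both sides in polar coordinates around `c`, compared circle by circle.
  rw [mul_comm, ← setLIntegral_const, setLIntegral_ball_eq_setLIntegral_circleMap,
    setLIntegral_ball_eq_setLIntegral_circleMap, Measure.volume_eq_prod,
    setLIntegral_prod _ (by fun_prop), setLIntegral_prod _ hmeas]
  refine setLIntegral_mono' measurableSet_Ioo fun ρ hρ ↦ ?_
  rw [lintegral_const_mul' _ _ ENNReal.ofReal_ne_top,
    lintegral_const_mul' _ _ ENNReal.ofReal_ne_top, setLIntegral_const, Real.volume_Ioo,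
    sub_neg_eq_add, ← two_mul, mul_comm _ (ENNReal.ofReal _)]
  gcongr
  have hρ' : DiffContOnCl ℂ f (ball c |ρ|) :=
    hf.mono (ball_subset_ball (by rw [abs_of_pos hρ.1]; exact hρ.2.le))
  exact hρ'.ofReal_two_pi_mul_enorm_le_lintegral

theorem volume_ball_half_norm_mul_enorm (z : ℂ) :
    volume (ball z (‖z‖ / 2)) * ‖f z‖ₑ = volume (ball (0 : ℂ) (1 / 2)) * ‖z ^ 2 * f z‖ₑ := by
  simp only [Complex.volume_ball, enorm_mul, enorm_pow]
  rw [ENNReal.ofReal_div_of_pos two_pos, ofReal_norm, one_div, ENNReal.ofReal_inv_of_pos two_pos]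
  simp only [div_eq_mul_inv, ENNReal.ofReal_ofNat]
  ring

theorem tendsto_sq_mul_of_integrableOn {s : Set ℂ} (hs : s ∈ 𝓝[≠] 0)
    (hf : DifferentiableOn ℂ f s) (hint : IntegrableOn f s) :
    Tendsto (fun z ↦ z ^ 2 * f z) (𝓝[≠] 0) (𝓝 0) := by
  obtain ⟨ε, hε, hεs⟩ := Metric.mem_nhdsWithin_iff.1 hs
  have hdisc : ∀ᶠ z in 𝓝[≠] (0 : ℂ), closedBall z (‖z‖ / 2) ⊆ s := by
    filter_upwards [inter_mem_nhdsWithin _ (ball_mem_nhds 0 (half_pos hε))] with z hz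
    exact (closedBall_half_norm_subset hz.1 (mem_ball_zero_iff.1 hz.2)).trans hεs
  have hvol : Tendsto (fun z : ℂ ↦ volume (ball z (‖z‖ / 2))) (𝓝[≠] 0) (𝓝 0) := by
    have : Continuous fun z : ℂ ↦ ENNReal.ofReal (‖z‖ / 2) ^ 2 * NNReal.pi :=
      (ENNReal.continuous_mul_const ENNReal.coe_ne_top).comp <|
        (ENNReal.continuous_pow 2).comp <| ENNReal.continuous_ofReal.comp <|
          continuous_norm.div_const 2
    simpa using (this.tendsto 0).mono_left nhdsWithin_le_nhds
  have hsmall : Tendsto (fun z ↦ ∫⁻ w in ball z (‖z‖ / 2), ‖f w‖ₑ ∂volume.restrict s)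
      (𝓝[≠] 0) (𝓝 0) :=
    tendsto_setLIntegral_zero hint.2.ne <| tendsto_of_tendsto_of_tendsto_of_le_of_le
      tendsto_const_nhds hvol (fun _ ↦ bot_le) fun _ ↦ Measure.restrict_apply_le _ _
  have hmean : ∀ᶠ z in 𝓝[≠] (0 : ℂ), volume (ball z (‖z‖ / 2)) * ‖f z‖ₑ ≤
      ∫⁻ w in ball z (‖z‖ / 2), ‖f w‖ₑ ∂volume.restrict s := by
    filter_upwards [hdisc] with z hz
    rw [Measure.restrict_restrict measurableSet_ball,
      inter_eq_left.2 (ball_subset_closedBall.trans hz)]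
    exact (hf.diffContOnCl_ball hz).volume_ball_mul_enorm_le_setLIntegral
  have hK : volume (ball (0 : ℂ) (1 / 2)) ≠ 0 := (measure_ball_pos volume 0 one_half_pos).ne'
  have := tendsto_of_tendsto_of_tendsto_of_le_of_le' tendsto_const_nhds hsmall
    (.of_forall fun _ ↦ bot_le) hmean
  simp only [volume_ball_half_norm_mul_enorm] at this
  rw [tendsto_zero_iff_enorm_tendsto_zero]
  simpa only [ENNReal.inv_mul_cancel_left hK measure_ball_lt_top.ne, mul_zero] using
    ENNReal.Tendsto.const_mul this (Or.inr (ENNReal.inv_ne_top.2 hK))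

theorem tendsto_sq_mul_of_norm_mul_sq_mul_log_sq_le {C : ℝ}
    (hC : ∀ᶠ z in 𝓝[≠] (0 : ℂ), ‖f z‖ * ‖z‖ ^ 2 * Real.log ‖z‖ ^ 2 ≤ C) :
    Tendsto (fun z ↦ z ^ 2 * f z) (𝓝[≠] 0) (𝓝 0) := by
  have hlog : Tendsto (fun z : ℂ ↦ Real.log ‖z‖ ^ 2) (𝓝[≠] 0) atTop := by
    have := (tendsto_pow_atTop two_ne_zero).comp <| tendsto_neg_atBot_atTop.comp <|
      Real.tendsto_log_nhdsGT_zero.comp (tendsto_norm_nhdsNE_zero (E := ℂ))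
    simpa only [Function.comp_def, neg_sq] using this
  refine squeeze_zero_norm' ?_ (tendsto_const_nhds (x := C) |>.div_atTop hlog)
  filter_upwards [hC, hlog.eventually_gt_atTop 0] with z hz hpos
  rw [norm_mul, norm_pow, le_div_iff₀ hpos]
  linarith

theorem exists_differentiableOn_insert_eq_mul_of_tendsto {s : Set ℂ}
    (hs : s ∈ 𝓝[≠] 0) (hf : DifferentiableOn ℂ f s)
    (h : Tendsto (fun z ↦ z ^ 2 * f z) (𝓝[≠] 0) (𝓝 0)) :
    ∃ g : ℂ → ℂ, DifferentiableOn ℂ g (insert 0 s) ∧ ∀ z ∈ s, z ≠ 0 → g z = z * f z := by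
  have ho : (fun z ↦ z * f z - 0 * f 0) =o[𝓝[≠] 0] fun z ↦ (z - 0)⁻¹ := by
    simp only [zero_mul, sub_zero]
    have hinv : ∀ᶠ z in 𝓝[≠] (0 : ℂ), z⁻¹ = 0 → z * f z = 0 :=
      eventually_mem_nhdsWithin.mono fun z hz hz' ↦ absurd hz' (inv_ne_zero hz)
    rw [Asymptotics.isLittleO_iff_tendsto' hinv]
    refine h.congr' (eventually_mem_nhdsWithin.mono fun z hz ↦ ?_)
    simp only [div_inv_eq_mul]
    ring
  exact ⟨_, Complex.differentiableOn_update_limUnder_insert_of_isLittleO hs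
    (differentiableOn_id.mul hf) ho, fun z _ hz ↦ Function.update_of_ne hz _ _⟩

theorem exists_norm_mul_le_of_continuousOn {g : ℂ → ℂ} {r : ℝ}
    (hg : ContinuousOn g (closedBall 0 r)) (hgf : ∀ z : ℂ, z ≠ 0 → ‖z‖ < r → g z = z * f z) :
    ∃ M, ∀ z : ℂ, z ≠ 0 → ‖z‖ < r → ‖z‖ * ‖f z‖ ≤ M := by
  obtain ⟨M, hM⟩ := (isCompact_closedBall 0 r).exists_bound_of_continuousOn hg
  refine ⟨M, fun z hz0 hz ↦ ?_⟩
  rw [← norm_mul, ← hgf z hz0 hz]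
  exact hM z (mem_closedBall_zero_iff.2 hz.le)

theorem mul_sq_mul_log_sq_le {a t M : ℝ} (ha : 0 ≤ a) (ht₀ : 0 < t) (ht₁ : t ≤ 1)
    (h : t * a ≤ M) : a * t ^ 2 * Real.log t ^ 2 ≤ 4 * M := by
  have hsqrt : (t ^ (1 / 2 : ℝ)) ^ 2 = t := by
    rw [← Real.rpow_natCast, ← Real.rpow_mul ht₀.le]
    norm_num
  have hlog : t * Real.log t ^ 2 ≤ 4 := by
    have := Real.abs_log_mul_self_rpow_lt t (1 / 2) ht₀ ht₁ one_half_pos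
    calc t * Real.log t ^ 2 = |Real.log t * t ^ (1 / 2 : ℝ)| ^ 2 := by
          rw [sq_abs, mul_pow, hsqrt, mul_comm]
      _ ≤ 2 ^ 2 := by gcongr; exact (this.trans_eq (by norm_num)).le
      _ = 4 := by norm_num
  calc a * t ^ 2 * Real.log t ^ 2 = (t * a) * (t * Real.log t ^ 2) := by ring
    _ ≤ M * 4 := mul_le_mul h hlog (by positivity) ((mul_nonneg ht₀.le ha).trans h)
    _ = 4 * M := mul_comm _ _

theorem integrableOn_of_norm_mul_le {r M : ℝ}
    (hf : ContinuousOn f {z : ℂ | ‖z‖ < r ∧ z ≠ 0})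
    (hM : ∀ z : ℂ, z ≠ 0 → ‖z‖ < r → ‖z‖ * ‖f z‖ ≤ M) :
    IntegrableOn f {z : ℂ | ‖z‖ < r ∧ z ≠ 0} := by
  set S := {z : ℂ | ‖z‖ < r ∧ z ≠ 0}
  have hS : MeasurableSet S :=
    ((isOpen_lt continuous_norm continuous_const).inter isOpen_ne).measurableSet
  rw [← inter_eq_left.2 fun z (hz : z ∈ S) ↦ mem_ball_zero_iff.2 hz.1,
    ← integrableOn_indicator_iff hS]
  refine integrableOn_ball_of_norm_le_rpow (α := 1) (C := M) (by simp) (by simp) ?_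
    ((aestronglyMeasurable_indicator_iff hS).2 (hf.aestronglyMeasurable hS))
  filter_upwards [ae_restrict_mem measurableSet_ball,
    ae_restrict_of_ae (compl_mem_ae_iff.2 (measure_singleton (0 : ℂ)))] with z hz hz0
  rw [indicator_of_mem (show z ∈ S from ⟨mem_ball_zero_iff.1 hz, hz0⟩), Real.rpow_neg_one,
    ← div_eq_mul_inv, le_div_iff₀ (norm_pos_iff.2 hz0), mul_comm]
  exact hM z hz0 (mem_ball_zero_iff.1 hz)

end

/-- For a holomorphic function `φ` on the punctured unit disc, the following are equivalent:
(i) `φ` is (Lebesgue-area) integrable on `{0 < |z| < 1/2}`;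
(ii) `|φ(z)| |z|² (log|z|)²` is bounded on `{0 < |z| < 1/2}`;
(iii) `z φ(z)` extends holomorphically over `0`, i.e. `φ` has at worst a simple pole at `0`. -/
theorem integrable_iff_bounded_iff_simple_pole (φ : ℂ → ℂ)
    (hφ : DifferentiableOn ℂ φ {z : ℂ | ‖z‖ < 1 ∧ z ≠ 0}) :
    (MeasureTheory.IntegrableOn φ {z : ℂ | ‖z‖ < 1 / 2 ∧ z ≠ 0} ↔
      ∃ C : ℝ, ∀ z : ℂ, z ≠ 0 → ‖z‖ < 1 / 2 →
        ‖φ z‖ * ‖z‖ ^ 2 * Real.log (‖z‖) ^ 2 ≤ C) ∧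
    ((∃ C : ℝ, ∀ z : ℂ, z ≠ 0 → ‖z‖ < 1 / 2 →
        ‖φ z‖ * ‖z‖ ^ 2 * Real.log (‖z‖) ^ 2 ≤ C) ↔
      ∃ g : ℂ → ℂ, DifferentiableOn ℂ g {z : ℂ | ‖z‖ < 1} ∧
        ∀ z : ℂ, z ≠ 0 → ‖z‖ < 1 → g z = z * φ z) := by
  have hU₀ := setOf_norm_lt_and_ne_zero_mem_nhdsNE (E := ℂ) one_half_pos
  have hφ₀ : DifferentiableOn ℂ φ {z : ℂ | ‖z‖ < 1 / 2 ∧ z ≠ 0} :=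
    hφ.mono fun z hz ↦ ⟨by linarith [hz.1], hz.2⟩
  have extend (h : Tendsto (fun z ↦ z ^ 2 * φ z) (𝓝[≠] 0) (𝓝 0)) : ∃ g : ℂ → ℂ,
      DifferentiableOn ℂ g {z : ℂ | ‖z‖ < 1} ∧ ∀ z : ℂ, z ≠ 0 → ‖z‖ < 1 → g z = z * φ z := by
    obtain ⟨g, hg, hgφ⟩ := exists_differentiableOn_insert_eq_mul_of_tendsto
      (setOf_norm_lt_and_ne_zero_mem_nhdsNE one_pos) hφ h
    have hins : insert 0 {z : ℂ | ‖z‖ < 1 ∧ z ≠ 0} = {z : ℂ | ‖z‖ < 1} := by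
      ext z; rcases eq_or_ne z 0 with rfl | hz <;> simp [*]
    exact ⟨g, hins ▸ hg, fun z hz0 hz ↦ hgφ z ⟨hz, hz0⟩ hz0⟩
  have bound : (∃ g : ℂ → ℂ, DifferentiableOn ℂ g {z : ℂ | ‖z‖ < 1} ∧
      ∀ z : ℂ, z ≠ 0 → ‖z‖ < 1 → g z = z * φ z) →
      ∃ M, ∀ z : ℂ, z ≠ 0 → ‖z‖ < 1 / 2 → ‖z‖ * ‖φ z‖ ≤ M := fun ⟨g, hg, hgφ⟩ ↦
    exists_norm_mul_le_of_continuousOn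
      (hg.continuousOn.mono fun z hz ↦ by simp at hz ⊢; linarith)
      fun z hz0 hz ↦ hgφ z hz0 (by linarith)
  have bounded : (∃ M, ∀ z : ℂ, z ≠ 0 → ‖z‖ < 1 / 2 → ‖z‖ * ‖φ z‖ ≤ M) →
      ∃ C : ℝ, ∀ z : ℂ, z ≠ 0 → ‖z‖ < 1 / 2 → ‖φ z‖ * ‖z‖ ^ 2 * Real.log ‖z‖ ^ 2 ≤ C :=
    fun ⟨M, hM⟩ ↦ ⟨4 * M, fun z hz0 hz ↦ mul_sq_mul_log_sq_le (norm_nonneg _)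
      (norm_pos_iff.2 hz0) (by linarith) (hM z hz0 hz)⟩
  have tendsto : (∃ C : ℝ, ∀ z : ℂ, z ≠ 0 → ‖z‖ < 1 / 2 →
      ‖φ z‖ * ‖z‖ ^ 2 * Real.log ‖z‖ ^ 2 ≤ C) → Tendsto (fun z ↦ z ^ 2 * φ z) (𝓝[≠] 0) (𝓝 0) :=
    fun ⟨C, hC⟩ ↦ tendsto_sq_mul_of_norm_mul_sq_mul_log_sq_le
      (mem_of_superset hU₀ fun z hz ↦ hC z hz.2 hz.1)
  refine ⟨⟨fun hi ↦ bounded (bound (extend (tendsto_sq_mul_of_integrableOn hU₀ hφ₀ hi))),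
    fun hii ↦ ?_⟩, ⟨fun hii ↦ extend (tendsto hii), fun hiii ↦ bounded (bound hiii)⟩⟩
  obtain ⟨M, hM⟩ := bound (extend (tendsto hii))
  exact integrableOn_of_norm_mul_le hφ₀.continuousOn hM
end

section
/- Let R > 0 and let φ be a holomorphic function on the punctured disc {z ∈ ℂ : 0 < |z| < R} with ∫_{0 < |z| < R} |φ(z)| dA(z) < ∞ (dA the Lebesgue area measure). Then z²·φ(z) → 0 as z → 0; in particular φ has neither an essential singularity nor a pole of order ≥ 2 at 0, and z ↦ z·φ(z) extends to a holomorphic function on {|z| < R}. -/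
/-!
By the mean value property, `‖φ z‖` is at most the average of `‖φ‖` over the disc `B(z, |z|/2)`,
which for small `z` lies in the punctured disc and inside `B(0, 2|z|)`. Hence
`|z|² ‖φ z‖ ≤ (4/π) ∫_{0 < |w| < 2|z|} ‖φ‖`, and the right-hand side tends to `0` by absolute
continuity of the integral. Then `z² φ(z)` has a removable singularity with value `0` at `0`, so
its difference quotient at `0`, which is `z φ(z)` off `0`, is holomorphic on the whole disc.
-/

open Real MeasureTheory Complex Filter Topology Set Metric

section

variable {E : Type*} [NormedAddCommGroup E] [NormedSpace ℝ E]

theorem add_polarCoord_symm_eq_circleMap (c : ℂ) (p : ℝ × ℝ) :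
    c + Complex.polarCoord.symm p = circleMap c p.1 p.2 := by
  simp only [Complex.polarCoord_symm_apply, circleMap, Complex.exp_mul_I]
  push_cast
  ring

theorem setIntegral_ball_eq_setIntegral_circleMap (g : ℂ → E) (c : ℂ) (r : ℝ) :
    ∫ w in ball c r, g w = ∫ p in Ioo 0 r ×ˢ Ioo (-π) π, p.1 • g (circleMap c p.1 p.2) := by
  have hmeas : MeasurableSet {p : ℝ × ℝ | p.1 < r} :=
    measurableSet_lt measurable_fst measurable_const
  calc ∫ w in ball c r, g w = ∫ w, (ball c r).indicator g (c + w) := by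
        rw [integral_add_left_eq_self, integral_indicator measurableSet_ball]
    _ = ∫ p in polarCoord.target, p.1 • (ball c r).indicator g (c + Complex.polarCoord.symm p) :=
        (Complex.integral_comp_polarCoord_symm _).symm
    _ = ∫ p in polarCoord.target, {p : ℝ × ℝ | p.1 < r}.indicator
          (fun p => p.1 • g (circleMap c p.1 p.2)) p := by
        refine setIntegral_congr_fun polarCoord.open_target.measurableSet fun p hp => ?_
        have hdist : dist (circleMap c p.1 p.2) c = p.1 := circleMap_mem_sphere c hp.1.le p.2
        rw [add_polarCoord_symm_eq_circleMap]
        by_cases hpr : p.1 < r <;> simp [indicator, hdist, hpr]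
    _ = _ := by
        rw [setIntegral_indicator hmeas, polarCoord_target]
        congr 2
        ext p
        simp only [mem_inter_iff, mem_prod, mem_Ioi, mem_Ioo, mem_ofPred_eq]
        tauto

theorem setIntegral_ball_eq_intervalIntegral_circleAverage {g : ℂ → E} {c : ℂ} {r : ℝ}
    (hr : 0 ≤ r) (hg : ContinuousOn g (closedBall c r)) :
    ∫ w in ball c r, g w = ∫ s in 0..r, (2 * π * s) • circleAverage g c s := by
  have hcont : ContinuousOn (fun p : ℝ × ℝ => p.1 • g (circleMap c p.1 p.2))
      (Icc 0 r ×ˢ Icc (-π) π) := by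
    refine continuous_fst.continuousOn.smul (hg.comp circleMap.continuous.continuousOn ?_)
    rintro ⟨s, θ⟩ ⟨hs, -⟩
    exact closedBall_subset_closedBall hs.2 (circleMap_mem_closedBall c hs.1 θ)
  have hint := (hcont.integrableOn_compact (μ := volume.prod volume)
    (isCompact_Icc.prod isCompact_Icc)).mono_set
    (prod_mono Ioo_subset_Icc_self Ioo_subset_Icc_self)
  rw [setIntegral_ball_eq_setIntegral_circleMap, Measure.volume_eq_prod, setIntegral_prod _ hint,
    intervalIntegral.integral_of_le hr, integral_Ioc_eq_integral_Ioo]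
  refine setIntegral_congr_fun measurableSet_Ioo fun s _ => ?_
  have hshift : ∫ θ in (-π)..π, g (circleMap c s θ) = ∫ θ in 0..2 * π, g (circleMap c s θ) := by
    simpa [two_mul] using
      ((periodic_circleMap c s).comp g).intervalIntegral_add_eq (-π) 0
  rw [integral_smul, ← integral_Ioc_eq_integral_Ioo,
    ← intervalIntegral.integral_of_le (by linarith [pi_pos]), hshift, circleAverage_def,
    smul_smul]
  congr 1
  field_simp

theorem norm_circleAverage_le (f : ℂ → E) (c : ℂ) (R : ℝ) :
    ‖circleAverage f c R‖ ≤ circleAverage (fun z => ‖f z‖) c R := by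
  rw [circleAverage_def, circleAverage_def, norm_smul, smul_eq_mul, norm_inv,
    Real.norm_of_nonneg two_pi_pos.le]
  gcongr
  exact intervalIntegral.norm_integral_le_integral_norm two_pi_pos.le

theorem MeasureTheory.IntegrableOn.tendsto_setIntegral_inter_ball_zero {α : Type*} [MetricSpace α]
    [MeasurableSpace α] [OpensMeasurableSpace α] [ProperSpace α] {μ : Measure α}
    [IsFiniteMeasureOnCompacts μ] [NullSingletonClass μ] {f : α → E} {s : Set α}
    (hf : IntegrableOn f s μ) (c : α) :
    Tendsto (fun ρ => ∫ x in s ∩ ball c ρ, f x ∂μ) (𝓝 0) (𝓝 0) := by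
  have hball : Tendsto (fun ρ => μ (ball c ρ)) (𝓝 0) (𝓝 0) := by
    have := tendsto_measure_cthickening_of_isCompact (μ := μ) (isCompact_singleton (x := c))
    rw [measure_singleton] at this
    exact tendsto_of_tendsto_of_tendsto_of_le_of_le tendsto_const_nhds this (fun _ => zero_le)
      fun ρ => measure_mono (ball_subset_closedBall.trans
        (closedBall_subset_cthickening_singleton c ρ))
  refine (hf.tendsto_setIntegral_nhds_zero (s := fun ρ => ball c ρ) ?_).congr fun ρ => ?_
  · exact tendsto_of_tendsto_of_tendsto_of_le_of_le tendsto_const_nhds hball (fun _ => zero_le)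
      fun ρ => Measure.restrict_apply_le s (ball c ρ)
  · rw [Measure.restrict_restrict measurableSet_ball, inter_comm]

end

theorem norm_mem_Icc_of_mem_closedBall_half_norm {G : Type*} [SeminormedAddCommGroup G] {z w : G}
    (hw : w ∈ closedBall z (‖z‖ / 2)) : ‖w‖ ∈ Icc (‖z‖ / 2) (3 / 2 * ‖z‖) := by
  rw [mem_closedBall, dist_eq_norm] at hw
  constructor <;> linarith [norm_sub_norm_le w z, norm_sub_norm_le z w, norm_sub_rev z w]

section Holomorphic

variable {F : Type*} [NormedAddCommGroup F] [NormedSpace ℂ F] [CompleteSpace F]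

theorem DiffContOnCl.pi_mul_sq_mul_norm_le_setIntegral_norm {f : ℂ → F} {c : ℂ} {r : ℝ}
    (hf : DiffContOnCl ℂ f (ball c r)) (hr : 0 < r) :
    π * r ^ 2 * ‖f c‖ ≤ ∫ w in ball c r, ‖f w‖ := by
  have hcont : ContinuousOn (fun w => ‖f w‖) (closedBall c r) := by
    simpa only [closure_ball c hr.ne'] using hf.continuousOn.norm
  have hmean : ∀ s ∈ Icc 0 r, ‖f c‖ ≤ Real.circleAverage (fun w => ‖f w‖) c s := fun s hs =>
    calc ‖f c‖ = ‖Real.circleAverage f c s‖ := by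
          rw [(hf.mono (ball_subset_ball ((abs_of_nonneg hs.1).trans_le hs.2))).circleAverage]
      _ ≤ _ := norm_circleAverage_le f c s
  have hint : IntervalIntegrable (fun s => (2 * π * s) • Real.circleAverage (fun w => ‖f w‖) c s)
      volume 0 r := by
    refine ContinuousOn.intervalIntegrable ?_
    rw [uIcc_of_le hr.le]
    refine (continuousOn_const.mul continuousOn_id).smul
      ((hcont.mono fun z hz => ?_).circleAverage fun s hs => hs.1)
    simpa [dist_eq_norm] using hz.2
  rw [setIntegral_ball_eq_intervalIntegral_circleAverage hr.le hcont]
  calc π * r ^ 2 * ‖f c‖ = ∫ s in 0..r, (2 * π * s) • ‖f c‖ := by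
        rw [intervalIntegral.integral_smul_const, intervalIntegral.integral_const_mul, integral_id,
          smul_eq_mul]
        ring
    _ ≤ _ := intervalIntegral.integral_mono_on hr.le
        (Continuous.intervalIntegrable (by fun_prop) _ _) hint fun s hs =>
        smul_le_smul_of_nonneg_left (hmean s hs) (by have := hs.1; positivity)

theorem tendsto_sq_smul_nhdsNE_zero_of_integrableOn {φ : ℂ → F} {s : Set ℂ} (hs : s ∈ 𝓝[≠] 0)
    (hφ : DifferentiableOn ℂ φ s) (hint : IntegrableOn φ s) :
    Tendsto (fun z => z ^ 2 • φ z) (𝓝[≠] 0) (𝓝 0) := by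
  obtain ⟨ε, hε, hεs⟩ := Metric.mem_nhdsWithin_iff.1 hs
  have hint' : IntegrableOn (fun w => ‖φ w‖) s := hint.norm
  have hbound : ∀ᶠ z in 𝓝[≠] (0 : ℂ),
      ‖z ^ 2 • φ z‖ ≤ 4 / π * ∫ w in s ∩ ball 0 (2 * ‖z‖), ‖φ w‖ := by
    filter_upwards [self_mem_nhdsWithin,
      nhdsWithin_le_nhds (ball_mem_nhds 0 (half_pos hε))] with z hz hzε
    have hz₀ : 0 < ‖z‖ := norm_pos_iff.2 hz
    rw [mem_ball_zero_iff] at hzε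
    have hsub : closedBall z (‖z‖ / 2) ⊆ s := fun w hw => by
      have hw' := norm_mem_Icc_of_mem_closedBall_half_norm hw
      refine hεs ⟨mem_ball_zero_iff.2 (by linarith [hw'.2]), ?_⟩
      exact norm_pos_iff.1 (by linarith [hw'.1])
    have hball : ball z (‖z‖ / 2) ⊆ s ∩ ball 0 (2 * ‖z‖) := fun w hw =>
      ⟨hsub (ball_subset_closedBall hw), mem_ball_zero_iff.2
        (by linarith [(norm_mem_Icc_of_mem_closedBall_half_norm (ball_subset_closedBall hw)).2])⟩
    have hmean := (hφ.diffContOnCl_ball hsub).pi_mul_sq_mul_norm_le_setIntegral_norm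
      (half_pos hz₀)
    have hmono : ∫ w in ball z (‖z‖ / 2), ‖φ w‖ ≤ ∫ w in s ∩ ball 0 (2 * ‖z‖), ‖φ w‖ :=
      setIntegral_mono_set (hint'.mono_set inter_subset_left)
        (ae_of_all _ fun w => norm_nonneg _) hball.eventuallyLE
    calc ‖z ^ 2 • φ z‖ = 4 / π * (π * (‖z‖ / 2) ^ 2 * ‖φ z‖) := by
          rw [norm_smul, norm_pow]
          field_simp
          ring
      _ ≤ _ := by gcongr; exact hmean.trans hmono
  have hI := (hint'.tendsto_setIntegral_inter_ball_zero 0).comp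
    (((continuous_norm.const_mul 2).tendsto' (0 : ℂ) 0 (by simp)).mono_left
      (nhdsWithin_le_nhds (s := {0}ᶜ)))
  exact squeeze_zero_norm' hbound (by simpa using hI.const_mul (4 / π))

theorem exists_differentiableOn_eq_sub_smul_of_tendsto {f : ℂ → F} {s : Set ℂ} {c : ℂ}
    (hs : s ∈ 𝓝 c) (hf : DifferentiableOn ℂ f (s \ {c}))
    (hlim : Tendsto (fun z => (z - c) ^ 2 • f z) (𝓝[≠] c) (𝓝 0)) :
    ∃ g : ℂ → F, DifferentiableOn ℂ g s ∧ ∀ z ∈ s, z ≠ c → g z = (z - c) • f z := by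
  classical
  set Φ := Function.update (fun z => (z - c) ^ 2 • f z) c 0
  have hΦ : DifferentiableOn ℂ Φ s := by
    refine (differentiableOn_compl_singleton_and_continuousAt_iff hs).1
      ⟨?_, continuousAt_update_same.2 hlim⟩
    exact (((differentiableOn_id.sub_const c).pow 2).smul hf).congr fun z hz =>
      Function.update_of_ne hz.2 _ _
  refine ⟨dslope Φ c, (differentiableOn_dslope hs).2 hΦ, fun z _ hz => ?_⟩
  have hΦz : Φ z = (z - c) ^ 2 • f z := Function.update_of_ne hz _ _
  have hΦc : Φ c = 0 := Function.update_self _ _ _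
  rw [dslope_of_ne Φ hz, slope_def_module, hΦz, hΦc, sub_zero, smul_smul, sq,
    inv_mul_cancel_left₀ (sub_ne_zero.2 hz)]

end Holomorphic

/-- If `φ` is holomorphic on the punctured disc `{0 < |z| < R}` and `L¹` with respect to
Lebesgue area measure, then `z²φ(z) → 0` as `z → 0`; in particular `φ` has neither an
essential singularity nor a pole of order `≥ 2` at `0`, and `z φ(z)` extends holomorphically
over `0`. -/
theorem integrable_implies_simple_pole (R : ℝ) (hR : 0 < R) (φ : ℂ → ℂ)
    (hφ : DifferentiableOn ℂ φ {z : ℂ | ‖z‖ < R ∧ z ≠ 0})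
    (hint : MeasureTheory.IntegrableOn φ {z : ℂ | ‖z‖ < R ∧ z ≠ 0}) :
    Filter.Tendsto (fun z : ℂ => z ^ 2 * φ z) (𝓝[≠] (0 : ℂ)) (𝓝 0) ∧
    ∃ g : ℂ → ℂ, DifferentiableOn ℂ g {z : ℂ | ‖z‖ < R} ∧
      ∀ z : ℂ, z ≠ 0 → ‖z‖ < R → g z = z * φ z := by
  have hdisc : {z : ℂ | ‖z‖ < R} ∈ 𝓝 (0 : ℂ) :=
    (isOpen_lt continuous_norm continuous_const).mem_nhds (by simpa using hR)
  have hlim : Tendsto (fun z : ℂ => z ^ 2 * φ z) (𝓝[≠] 0) (𝓝 0) :=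
    tendsto_sq_smul_nhdsNE_zero_of_integrableOn (sdiff_mem_nhdsWithin_compl hdisc {0}) hφ hint
  obtain ⟨g, hg, hgφ⟩ := exists_differentiableOn_eq_sub_smul_of_tendsto hdisc hφ
    (by simpa only [sub_zero, smul_eq_mul] using hlim)
  exact ⟨hlim, g, hg, fun z hz hzR => by simpa only [sub_zero, smul_eq_mul] using hgφ z hzR hz⟩
end
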